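/- Consider the loss function L of a 2-shortcut network (n = 2) whose activation functions σ_pre, σ_mid, σ_post are C^∞ with σ_mid(0) = σ_post(0) = 0. At the zero weight configuration w = 0, all second-order partial derivatives of L vanish except those pairing a layer-2 parameter with a layer-1 parameter of the same residual unit with matching inner index; precisely, for parameters w₁ = w^{r₁,l₁}_{i₁,j₁} and w₂ = w^{r₂,l₂}_{i₂,j₂}: (i) if r₁ = r₂ = r, l₁ = 2, l₂ = 1 and j₁ = i₂, then ∂²L/∂w₁∂w₂|_{w=0} = (σ_mid'(0)·σ_post'(0)/m)·Σ_{μ=1}^m σ_pre(x^μ_{j₂})·(x^μ_{i₁} − y^μ_{i₁}) (and symmetrically when l₁ = 1, l₂ = 2, r₁ = r₂, j₂ = i₁); (ii) ∂²L/∂w₁∂w₂|_{w=0} = 0 in all other cases (r₁ ≠ r₂, or l₁ = l₂, or the matching index condition fails). -/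

import Mathlib

noncomputable section

open scoped BigOperators

/-- Entrywise application of a scalar function to a vector. -/
def emap {d : ℕ} (σ : ℝ → ℝ) (v : Fin d → ℝ) : Fin d → ℝ := fun i => σ (v i)

/-- Matrix–vector product. -/
def mvec {d : ℕ} (M : Fin d → Fin d → ℝ) (v : Fin d → ℝ) : Fin d → ℝ :=
  fun i => ∑ j, M i j * v j

/-- The transformation path with `k` weight matrices applied to `v`:
`a₁ = W₀ v`, `a_{l+1} = W_l σmid.(a_l)`; `chain σmid W k v = a_k`. -/
def chain {d : ℕ} (σmid : ℝ → ℝ) (W : ℕ → Fin d → Fin d → ℝ) :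
    ℕ → (Fin d → ℝ) → (Fin d → ℝ)
  | 0, v => v
  | k + 1, v => mvec (W k) (if k = 0 then v else emap σmid (chain σmid W k v))

/-- One residual unit of an `n`-shortcut network:
`u(x) = σpost.(Wⁿ σmid.(⋯ σmid.(W¹ σpre.(x)))) + x`. -/
def resUnit {d : ℕ} (σpre σmid σpost : ℝ → ℝ) (n : ℕ) (W : ℕ → Fin d → Fin d → ℝ)
    (x : Fin d → ℝ) : Fin d → ℝ :=
  fun i => σpost (chain σmid W n (emap σpre x) i) + x i

/-- The `n`-shortcut network with `R` residual units: composition `u_R ∘ ⋯ ∘ u_1`. -/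
def net {d : ℕ} (σpre σmid σpost : ℝ → ℝ) (n : ℕ) (W : ℕ → ℕ → Fin d → Fin d → ℝ) :
    ℕ → (Fin d → ℝ) → (Fin d → ℝ)
  | 0, x => x
  | r + 1, x => resUnit σpre σmid σpost n (W r) (net σpre σmid σpost n W r x)

/-- Extend finitely indexed weights to ℕ-indexed weights (by zero out of range). -/
def extendW {R n d : ℕ} (W : Fin R → Fin n → Fin d → Fin d → ℝ) :
    ℕ → ℕ → Fin d → Fin d → ℝ :=
  fun r l => if h : r < R ∧ l < n then W ⟨r, h.1⟩ ⟨l, h.2⟩ else 0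

/-- The loss function of an `n`-shortcut network with `R` residual units,
as a function of the collection of all the weight matrices. -/
def loss {d m : ℕ} (σpre σmid σpost : ℝ → ℝ) (n R : ℕ) (X Y : Fin m → Fin d → ℝ)
    (W : Fin R → Fin n → Fin d → Fin d → ℝ) : ℝ :=
  (1 / (2 * (m : ℝ))) *
    ∑ μ : Fin m, ∑ i, (net σpre σmid σpost n (extendW W) R (X μ) i - Y μ i) ^ 2

/-- The coordinate direction in weight space corresponding to the parameter `w^{r,l}_{i,j}`. -/
def coordDir (R n d : ℕ) (r : Fin R) (l : Fin n) (i j : Fin d) :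
    Fin R → Fin n → Fin d → Fin d → ℝ :=
  fun r' l' i' j' => if r' = r ∧ l' = l ∧ i' = i ∧ j' = j then 1 else 0

/-- Second-order partial derivative of `f` at `0` along the directions `v₁, v₂`. -/
def d2 {E : Type*} [NormedAddCommGroup E] [NormedSpace ℝ E] (f : E → ℝ) (v₁ v₂ : E) : ℝ :=
  fderiv ℝ (fun w => fderiv ℝ f w v₂) (0 : E) v₁



/-! ### Auxiliary lemmas -/

section Aux

variable {d : ℕ} (σpre σmid σpost : ℝ → ℝ)

lemma fderiv_line {E : Type*} [NormedAddCommGroup E] [NormedSpace ℝ E]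
    (f : E → ℝ) (hf : Differentiable ℝ f) (w v : E) :
    fderiv ℝ f w v = deriv (fun s : ℝ => f (w + s • v)) 0 := by
  have h1 : HasDerivAt (fun s : ℝ => w + s • v) v 0 := by
    simpa using ((hasDerivAt_id (0:ℝ)).smul_const v).const_add w
  have h2 : HasDerivAt (fun s : ℝ => f (w + s • v)) (fderiv ℝ f w v) 0 := by
    have := (hf (w + (0:ℝ) • v)).hasFDerivAt.comp_hasDerivAt 0 h1
    simpa [Function.comp_def] using this
  exact h2.deriv.symm

lemma d2_eq_line {E : Type*} [NormedAddCommGroup E] [NormedSpace ℝ E]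
    (f : E → ℝ) (hf : ContDiff ℝ (⊤ : ℕ∞) f) (v₁ v₂ : E) :
    d2 f v₁ v₂ = deriv (fun t : ℝ => deriv (fun s : ℝ => f (t • v₁ + s • v₂)) 0) 0 := by
  have hdf : Differentiable ℝ f := hf.differentiable (by simp)
  have hG : Differentiable ℝ (fun w => fderiv ℝ f w v₂) := by
    have h1 : ContDiff ℝ (⊤ : ℕ∞) (fun w => fderiv ℝ f w) := hf.fderiv_right (by simp)
    exact fun w =>
      ((ContinuousLinearMap.apply ℝ ℝ v₂).differentiable.comp (h1.differentiable (by simp))) w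
  rw [d2, fderiv_line _ hG 0 v₁]
  congr 1
  funext t
  rw [zero_add, fderiv_line f hdf (t • v₁) v₂]

lemma key_deriv {m d : ℕ} (c D : Fin m → Fin d → ℝ)
    (h : Fin m → ℝ → ℝ → ℝ) (h0 : ∀ μ t, h μ t 0 = 0)
    (hs : Fin m → ℝ → ℝ) (hds : ∀ μ t, HasDerivAt (fun s => h μ t s) (hs μ t) 0)
    (A : Fin m → ℝ) (hdt : ∀ μ, HasDerivAt (fun t => hs μ t) (A μ) 0) :
    deriv (fun t : ℝ => deriv (fun s : ℝ =>
        (1/(2*(m:ℝ))) * ∑ μ, ∑ i, (D μ i + c μ i * h μ t s)^2) 0) 0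
      = (1/(2*(m:ℝ))) * ∑ μ, ∑ i, 2 * D μ i * c μ i * A μ := by
  have inner : ∀ t : ℝ, deriv (fun s : ℝ =>
      (1/(2*(m:ℝ))) * ∑ μ, ∑ i, (D μ i + c μ i * h μ t s)^2) 0
      = (1/(2*(m:ℝ))) * ∑ μ, ∑ i, 2 * D μ i * c μ i * hs μ t := by
    intro t
    have H : HasDerivAt (fun s : ℝ => (1/(2*(m:ℝ))) * ∑ μ, ∑ i, (D μ i + c μ i * h μ t s)^2)
        ((1/(2*(m:ℝ))) * ∑ μ, ∑ i, 2 * D μ i * c μ i * hs μ t) 0 := by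
      apply HasDerivAt.const_mul
      apply HasDerivAt.fun_sum
      intro μ _
      apply HasDerivAt.fun_sum
      intro i _
      have hterm : HasDerivAt (fun y => (D μ i + c μ i * h μ t y) ^ 2) _ 0 :=
        ((hasDerivAt_const (0:ℝ) (D μ i)).add ((hds μ t).const_mul (c μ i))).pow 2
      have h00 : D μ i + c μ i * h μ t 0 = D μ i := by simp [h0 μ t]
      simp only [Pi.add_apply, h00] at hterm
      refine hterm.congr_deriv ?_
      ring
    exact H.deriv
  have H2 : HasDerivAt (fun t : ℝ => (1/(2*(m:ℝ))) * ∑ μ, ∑ i, 2 * D μ i * c μ i * hs μ t)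
      ((1/(2*(m:ℝ))) * ∑ μ, ∑ i, 2 * D μ i * c μ i * A μ) 0 := by
    apply HasDerivAt.const_mul
    apply HasDerivAt.fun_sum
    intro μ _
    apply HasDerivAt.fun_sum
    intro i _
    simpa [mul_assoc] using ((hdt μ).const_mul (2 * D μ i * c μ i))
  rw [funext inner]
  exact H2.deriv

lemma chain_two (W : ℕ → Fin d → Fin d → ℝ) (v : Fin d → ℝ) :
    chain σmid W 2 v = mvec (W 1) (emap σmid (mvec (W 0) v)) := rfl

lemma resUnit_id (hmid0 : σmid 0 = 0) (hpost0 : σpost 0 = 0)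
    (W : ℕ → Fin d → Fin d → ℝ) (hW : W 0 = 0 ∨ W 1 = 0) (x : Fin d → ℝ) :
    resUnit σpre σmid σpost 2 W x = x := by
  funext i
  rcases hW with hW | hW
  · simp [resUnit, chain_two, mvec, emap, hW, hmid0, hpost0]
  · simp [resUnit, chain_two, mvec, emap, hW, hmid0, hpost0]

lemma net_id (hmid0 : σmid 0 = 0) (hpost0 : σpost 0 = 0)
    (W : ℕ → ℕ → Fin d → Fin d → ℝ) (H : ∀ r', W r' 0 = 0 ∨ W r' 1 = 0)
    (x : Fin d → ℝ) : ∀ k, net σpre σmid σpost 2 W k x = x := by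
  intro k
  induction k with
  | zero => rfl
  | succ k ih =>
      show resUnit σpre σmid σpost 2 (W k) (net σpre σmid σpost 2 W k x) = x
      rw [ih, resUnit_id σpre σmid σpost hmid0 hpost0 _ (H k)]

lemma net_one_unit (hmid0 : σmid 0 = 0) (hpost0 : σpost 0 = 0)
    (W : ℕ → ℕ → Fin d → Fin d → ℝ) (rv : ℕ)
    (H : ∀ r', r' ≠ rv → W r' 0 = 0 ∨ W r' 1 = 0) (x : Fin d → ℝ) :
    ∀ k, net σpre σmid σpost 2 W k x =
      if rv < k then resUnit σpre σmid σpost 2 (W rv) x else x := by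
  intro k
  induction k with
  | zero => simp [net]
  | succ k ih =>
      show resUnit σpre σmid σpost 2 (W k) (net σpre σmid σpost 2 W k x) = _
      rw [ih]
      by_cases hk : k = rv
      · subst hk
        simp
      · rw [resUnit_id σpre σmid σpost hmid0 hpost0 _ (H k hk)]
        by_cases h2 : rv < k
        · rw [if_pos h2, if_pos (by omega)]
        · rw [if_neg h2, if_neg (by omega)]

lemma resUnit_rank_one (hmid0 : σmid 0 = 0) (hpost0 : σpost 0 = 0)
    (t s : ℝ) (i₁ j₁ i₂ j₂ : Fin d) (W : ℕ → Fin d → Fin d → ℝ)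
    (hW1 : ∀ i j, W 1 i j = t * (if i = i₁ ∧ j = j₁ then 1 else 0))
    (hW0 : ∀ i j, W 0 i j = s * (if i = i₂ ∧ j = j₂ then 1 else 0))
    (x : Fin d → ℝ) :
    resUnit σpre σmid σpost 2 W x = fun i =>
      x i + (if i = i₁ ∧ j₁ = i₂ then 1 else 0) * σpost (t * σmid (s * σpre (x j₂))) := by
  have hb : mvec (W 0) (emap σpre x) = fun k => if k = i₂ then s * σpre (x j₂) else 0 := by
    funext k
    by_cases hk : k = i₂ <;>
      simp [mvec, hW0, hk, mul_ite, ite_mul, emap, Finset.sum_ite_eq']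
  have hc : emap σmid (mvec (W 0) (emap σpre x)) =
      fun k => if k = i₂ then σmid (s * σpre (x j₂)) else 0 := by
    funext k
    rw [hb]
    by_cases hk : k = i₂ <;> simp [emap, hk, hmid0]
  funext i
  rw [resUnit, chain_two, hc]
  have hch : mvec (W 1) (fun k => if k = i₂ then σmid (s * σpre (x j₂)) else 0) i
      = if i = i₁ ∧ j₁ = i₂ then t * σmid (s * σpre (x j₂)) else 0 := by
    by_cases hi : i = i₁
    · by_cases hj : j₁ = i₂
      · simp [mvec, hW1, hi, hj, mul_ite, ite_mul, Finset.sum_ite_eq']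
      · have hj' : i₂ ≠ j₁ := fun h => hj h.symm
        simp [mvec, hW1, hi, hj, hj', mul_ite, ite_mul, Finset.sum_ite_eq']
    · simp [mvec, hW1, hi, mul_ite, ite_mul]
  rw [hch]
  by_cases h : i = i₁ ∧ j₁ = i₂ <;> simp [h, hpost0, add_comm]

section Smooth

variable {F : Type*} [NormedAddCommGroup F] [NormedSpace ℝ F]

lemma contDiff_mvec_comp {M : F → Fin d → Fin d → ℝ} {v : F → Fin d → ℝ}
    (hM : ContDiff ℝ (⊤ : ℕ∞) M) (hv : ContDiff ℝ (⊤ : ℕ∞) v) :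
    ContDiff ℝ (⊤ : ℕ∞) (fun w => mvec (M w) (v w)) := by
  apply contDiff_pi.2
  intro i
  simp only [mvec]
  exact ContDiff.sum fun j _ =>
    ((contDiff_pi.1 (contDiff_pi.1 hM i) j).mul (contDiff_pi.1 hv j))

lemma contDiff_emap_comp {σ : ℝ → ℝ} (hσ : ContDiff ℝ (⊤ : ℕ∞) σ) {v : F → Fin d → ℝ}
    (hv : ContDiff ℝ (⊤ : ℕ∞) v) : ContDiff ℝ (⊤ : ℕ∞) (fun w => emap σ (v w)) :=
  contDiff_pi.2 fun i => hσ.comp (contDiff_pi.1 hv i)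

lemma contDiff_resUnit_comp (hpre : ContDiff ℝ (⊤ : ℕ∞) σpre) (hmid : ContDiff ℝ (⊤ : ℕ∞) σmid)
    (hpost : ContDiff ℝ (⊤ : ℕ∞) σpost)
    {W : F → ℕ → Fin d → Fin d → ℝ} (hW : ∀ l, ContDiff ℝ (⊤ : ℕ∞) (fun w => W w l))
    {x : F → Fin d → ℝ} (hx : ContDiff ℝ (⊤ : ℕ∞) x) :
    ContDiff ℝ (⊤ : ℕ∞) (fun w => resUnit σpre σmid σpost 2 (W w) (x w)) := by
  apply contDiff_pi.2
  intro i
  simp only [resUnit, chain_two]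
  exact (hpost.comp (contDiff_pi.1 (contDiff_mvec_comp (hW 1)
      (contDiff_emap_comp hmid (contDiff_mvec_comp (hW 0)
        (contDiff_emap_comp hpre hx)))) i)).add (contDiff_pi.1 hx i)

lemma contDiff_extendW {R n : ℕ} (r l : ℕ) :
    ContDiff ℝ (⊤ : ℕ∞) (fun w : Fin R → Fin n → Fin d → Fin d → ℝ => extendW w r l) := by
  simp only [extendW]
  by_cases h : r < R ∧ l < n
  · simp only [dif_pos h]
    have h1 : ContDiff ℝ (⊤ : ℕ∞) (fun w : Fin R → Fin n → Fin d → Fin d → ℝ => w ⟨r, h.1⟩) :=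
      (ContinuousLinearMap.proj (R := ℝ)
        (φ := fun _ : Fin R => Fin n → Fin d → Fin d → ℝ) ⟨r, h.1⟩).contDiff
    exact (contDiff_pi.1 h1 ⟨l, h.2⟩)
  · simp only [dif_neg h]
    exact contDiff_const

lemma contDiff_net {R : ℕ} (hpre : ContDiff ℝ (⊤ : ℕ∞) σpre) (hmid : ContDiff ℝ (⊤ : ℕ∞) σmid)
    (hpost : ContDiff ℝ (⊤ : ℕ∞) σpost) (x : Fin d → ℝ) (k : ℕ) :
    ContDiff ℝ (⊤ : ℕ∞) (fun w : Fin R → Fin 2 → Fin d → Fin d → ℝ =>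
      net σpre σmid σpost 2 (extendW w) k x) := by
  induction k with
  | zero => exact contDiff_const
  | succ k ih =>
      exact contDiff_resUnit_comp σpre σmid σpost hpre hmid hpost
        (fun l => contDiff_extendW k l) ih

lemma contDiff_loss {m R : ℕ} (hpre : ContDiff ℝ (⊤ : ℕ∞) σpre) (hmid : ContDiff ℝ (⊤ : ℕ∞) σmid)
    (hpost : ContDiff ℝ (⊤ : ℕ∞) σpost) (X Y : Fin m → Fin d → ℝ) :
    ContDiff ℝ (⊤ : ℕ∞) (loss σpre σmid σpost 2 R X Y) := by
  unfold loss
  exact contDiff_const.mul (ContDiff.sum fun μ _ => ContDiff.sum fun i _ =>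
    ((contDiff_pi.1 (contDiff_net σpre σmid σpost hpre hmid hpost (X μ) R) i).sub
      contDiff_const).pow 2)

end Smooth

lemma combo_entry {R : ℕ} (t s : ℝ) (r₁ r₂ : Fin R) (l₁ l₂ : Fin 2) (i₁ j₁ i₂ j₂ : Fin d)
    (r' l' : ℕ) (hr' : r' < R) (hl' : l' < 2) (i j : Fin d) :
    extendW (t • coordDir R 2 d r₁ l₁ i₁ j₁ + s • coordDir R 2 d r₂ l₂ i₂ j₂) r' l' i j =
      t * (if (⟨r', hr'⟩ : Fin R) = r₁ ∧ (⟨l', hl'⟩ : Fin 2) = l₁ ∧ i = i₁ ∧ j = j₁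
            then 1 else 0)
      + s * (if (⟨r', hr'⟩ : Fin R) = r₂ ∧ (⟨l', hl'⟩ : Fin 2) = l₂ ∧ i = i₂ ∧ j = j₂
            then 1 else 0) := by
  unfold extendW coordDir
  rw [dif_pos ⟨hr', hl'⟩]
  simp

lemma combo_entry_zero {R : ℕ} (t s : ℝ) (r₁ r₂ : Fin R) (l₁ l₂ : Fin 2)
    (i₁ j₁ i₂ j₂ : Fin d) (r' l' : ℕ)
    (h1 : ¬(r' = r₁.val ∧ l' = l₁.val)) (h2 : ¬(r' = r₂.val ∧ l' = l₂.val)) :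
    extendW (t • coordDir R 2 d r₁ l₁ i₁ j₁ + s • coordDir R 2 d r₂ l₂ i₂ j₂) r' l' = 0 := by
  funext i j
  unfold extendW coordDir
  by_cases h : r' < R ∧ l' < 2
  · rw [dif_pos h]
    have c1 : ¬((⟨r', h.1⟩ : Fin R) = r₁ ∧ (⟨l', h.2⟩ : Fin 2) = l₁ ∧ i = i₁ ∧ j = j₁) := by
      rintro ⟨a, b, -⟩
      exact h1 ⟨congrArg Fin.val a, congrArg Fin.val b⟩
    have c2 : ¬((⟨r', h.1⟩ : Fin R) = r₂ ∧ (⟨l', h.2⟩ : Fin 2) = l₂ ∧ i = i₂ ∧ j = j₂) := by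
      rintro ⟨a, b, -⟩
      exact h2 ⟨congrArg Fin.val a, congrArg Fin.val b⟩
    simp [c1, c2]
  · rw [dif_neg h]

end Aux

lemma deg_case {dx m R : ℕ} (σpre σmid σpost : ℝ → ℝ)
    (hmid0 : σmid 0 = 0) (hpost0 : σpost 0 = 0) (X Y : Fin m → Fin dx → ℝ)
    (v₁ v₂ : Fin R → Fin 2 → Fin dx → Fin dx → ℝ)
    (H : ∀ (t s : ℝ) (r' : ℕ), extendW (t • v₁ + s • v₂) r' 0 = 0 ∨
          extendW (t • v₁ + s • v₂) r' 1 = 0) :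
    deriv (fun t : ℝ => deriv (fun s : ℝ =>
      loss σpre σmid σpost 2 R X Y (t • v₁ + s • v₂)) 0) 0 = 0 := by
  have hconst : ∀ t s : ℝ, loss σpre σmid σpost 2 R X Y (t • v₁ + s • v₂)
      = (1/(2*(m:ℝ))) * ∑ μ, ∑ i, (X μ i - Y μ i)^2 := by
    intro t s
    unfold loss
    congr 1
    refine Finset.sum_congr rfl fun μ _ => Finset.sum_congr rfl fun i _ => ?_
    rw [net_id σpre σmid σpost hmid0 hpost0 _ (H t s) (X μ) R]
  have heq : (fun t : ℝ => deriv (fun s : ℝ =>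
      loss σpre σmid σpost 2 R X Y (t • v₁ + s • v₂)) 0) = fun _ => (0:ℝ) := by
    funext t
    rw [funext (hconst t)]
    exact deriv_const _ _
  rw [heq]
  exact deriv_const _ _

lemma main_case_A {dx m R : ℕ} (σpre σmid σpost : ℝ → ℝ)
    (hpre : ContDiff ℝ (⊤ : ℕ∞) σpre) (hmid : ContDiff ℝ (⊤ : ℕ∞) σmid) (hpost : ContDiff ℝ (⊤ : ℕ∞) σpost)
    (hmid0 : σmid 0 = 0) (hpost0 : σpost 0 = 0)
    (X Y : Fin m → Fin dx → ℝ) (r : Fin R) (i₁ j₁ i₂ j₂ : Fin dx) :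
    deriv (fun t : ℝ => deriv (fun s : ℝ => loss σpre σmid σpost 2 R X Y
        (t • coordDir R 2 dx r 1 i₁ j₁ + s • coordDir R 2 dx r 0 i₂ j₂)) 0) 0
      = if j₁ = i₂ then
          (deriv σmid 0 * deriv σpost 0 / (m : ℝ)) *
            ∑ μ : Fin m, σpre (X μ j₂) * (X μ i₁ - Y μ i₁)
        else 0 := by
  have hload : ∀ t s : ℝ, loss σpre σmid σpost 2 R X Y
      (t • coordDir R 2 dx r 1 i₁ j₁ + s • coordDir R 2 dx r 0 i₂ j₂) =
      (1/(2*(m:ℝ))) * ∑ μ, ∑ i, ((X μ i - Y μ i) +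
        (if i = i₁ ∧ j₁ = i₂ then (1:ℝ) else 0) *
          σpost (t * σmid (s * σpre (X μ j₂))))^2 := by
    intro t s
    have hW1 : ∀ i j, extendW (t • coordDir R 2 dx r 1 i₁ j₁ + s • coordDir R 2 dx r 0 i₂ j₂)
        r.val 1 i j = t * (if i = i₁ ∧ j = j₁ then 1 else 0) := by
      intro i j
      rw [combo_entry t s r r 1 0 i₁ j₁ i₂ j₂ r.val 1 r.isLt (by omega)]
      norm_num [Fin.ext_iff]
    have hW0 : ∀ i j, extendW (t • coordDir R 2 dx r 1 i₁ j₁ + s • coordDir R 2 dx r 0 i₂ j₂)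
        r.val 0 i j = s * (if i = i₂ ∧ j = j₂ then 1 else 0) := by
      intro i j
      rw [combo_entry t s r r 1 0 i₁ j₁ i₂ j₂ r.val 0 r.isLt (by omega)]
      norm_num [Fin.ext_iff]
    have H : ∀ r', r' ≠ r.val →
        extendW (t • coordDir R 2 dx r 1 i₁ j₁ + s • coordDir R 2 dx r 0 i₂ j₂) r' 0 = 0 ∨
        extendW (t • coordDir R 2 dx r 1 i₁ j₁ + s • coordDir R 2 dx r 0 i₂ j₂) r' 1 = 0 := by
      intro r' hne
      left
      apply combo_entry_zero <;> exact fun hc => hne hc.1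
    have hnet : ∀ μ, net σpre σmid σpost 2
        (extendW (t • coordDir R 2 dx r 1 i₁ j₁ + s • coordDir R 2 dx r 0 i₂ j₂)) R (X μ)
        = fun i => X μ i + (if i = i₁ ∧ j₁ = i₂ then (1:ℝ) else 0) *
            σpost (t * σmid (s * σpre (X μ j₂))) := by
      intro μ
      rw [net_one_unit σpre σmid σpost hmid0 hpost0 _ r.val H (X μ) R, if_pos r.isLt]
      exact resUnit_rank_one σpre σmid σpost hmid0 hpost0 t s i₁ j₁ i₂ j₂ _ hW1 hW0 (X μ)
    unfold loss
    congr 1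
    refine Finset.sum_congr rfl fun μ _ => Finset.sum_congr rfl fun i _ => ?_
    rw [hnet μ]
    ring
  simp only [hload]
  have hds : ∀ (μ : Fin m) (t : ℝ),
      HasDerivAt (fun s : ℝ => σpost (t * σmid (s * σpre (X μ j₂))))
        (deriv σpost 0 * (t * (deriv σmid 0 * σpre (X μ j₂)))) 0 := by
    intro μ t
    have d1 : HasDerivAt (fun s : ℝ => s * σpre (X μ j₂)) (σpre (X μ j₂)) 0 := by
      simpa using (hasDerivAt_id (0:ℝ)).mul_const (σpre (X μ j₂))
    have dm : HasDerivAt σmid (deriv σmid 0) ((fun s : ℝ => s * σpre (X μ j₂)) 0) := by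
      simpa using ((hmid.differentiable (by simp)) 0).hasDerivAt
    have d3 := (dm.comp 0 d1).const_mul t
    have dp : HasDerivAt σpost (deriv σpost 0)
        ((fun s : ℝ => t * σmid ((fun s : ℝ => s * σpre (X μ j₂)) s)) 0) := by
      simpa [hmid0] using ((hpost.differentiable (by simp)) 0).hasDerivAt
    have d4 := dp.comp 0 d3
    simpa [Function.comp_def, mul_assoc] using d4
  have hdt : ∀ μ : Fin m,
      HasDerivAt (fun t : ℝ => deriv σpost 0 * (t * (deriv σmid 0 * σpre (X μ j₂))))
        (deriv σpost 0 * (deriv σmid 0 * σpre (X μ j₂))) 0 := by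
    intro μ
    simpa using ((hasDerivAt_id (0:ℝ)).mul_const
      (deriv σmid 0 * σpre (X μ j₂))).const_mul (deriv σpost 0)
  rw [key_deriv (fun (_ : Fin m) (i : Fin dx) => if i = i₁ ∧ j₁ = i₂ then (1:ℝ) else 0)
      (fun μ i => X μ i - Y μ i)
      (fun μ t s => σpost (t * σmid (s * σpre (X μ j₂))))
      (by intro μ t; simp [hmid0, hpost0])
      (fun μ t => deriv σpost 0 * (t * (deriv σmid 0 * σpre (X μ j₂)))) hds
      (fun μ => deriv σpost 0 * (deriv σmid 0 * σpre (X μ j₂))) hdt]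
  by_cases hj : j₁ = i₂
  · rw [if_pos hj]
    have hsum : ∀ μ : Fin m, (∑ i, 2 * (X μ i - Y μ i) *
          (if i = i₁ ∧ j₁ = i₂ then (1:ℝ) else 0) *
          (deriv σpost 0 * (deriv σmid 0 * σpre (X μ j₂))))
        = 2 * (X μ i₁ - Y μ i₁) * (deriv σpost 0 * (deriv σmid 0 * σpre (X μ j₂))) := by
      intro μ
      simp [hj, mul_ite, ite_mul, Finset.sum_ite_eq']
    simp only [hsum]
    rw [Finset.mul_sum, Finset.mul_sum]
    refine Finset.sum_congr rfl fun μ _ => ?_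
    ring
  · rw [if_neg hj]
    have hz : ∀ i : Fin dx, (if i = i₁ ∧ j₁ = i₂ then (1:ℝ) else 0) = 0 := by
      intro i; simp [hj]
    simp [hz]

lemma main_case_B {dx m R : ℕ} (σpre σmid σpost : ℝ → ℝ)
    (hpre : ContDiff ℝ (⊤ : ℕ∞) σpre) (hmid : ContDiff ℝ (⊤ : ℕ∞) σmid) (hpost : ContDiff ℝ (⊤ : ℕ∞) σpost)
    (hmid0 : σmid 0 = 0) (hpost0 : σpost 0 = 0)
    (X Y : Fin m → Fin dx → ℝ) (r : Fin R) (i₁ j₁ i₂ j₂ : Fin dx) :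
    deriv (fun t : ℝ => deriv (fun s : ℝ => loss σpre σmid σpost 2 R X Y
        (t • coordDir R 2 dx r 0 i₁ j₁ + s • coordDir R 2 dx r 1 i₂ j₂)) 0) 0
      = if j₂ = i₁ then
          (deriv σmid 0 * deriv σpost 0 / (m : ℝ)) *
            ∑ μ : Fin m, σpre (X μ j₁) * (X μ i₂ - Y μ i₂)
        else 0 := by
  have hload : ∀ t s : ℝ, loss σpre σmid σpost 2 R X Y
      (t • coordDir R 2 dx r 0 i₁ j₁ + s • coordDir R 2 dx r 1 i₂ j₂) =
      (1/(2*(m:ℝ))) * ∑ μ, ∑ i, ((X μ i - Y μ i) +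
        (if i = i₂ ∧ j₂ = i₁ then (1:ℝ) else 0) *
          σpost (s * σmid (t * σpre (X μ j₁))))^2 := by
    intro t s
    have hW1 : ∀ i j, extendW (t • coordDir R 2 dx r 0 i₁ j₁ + s • coordDir R 2 dx r 1 i₂ j₂)
        r.val 1 i j = s * (if i = i₂ ∧ j = j₂ then 1 else 0) := by
      intro i j
      rw [combo_entry t s r r 0 1 i₁ j₁ i₂ j₂ r.val 1 r.isLt (by omega)]
      norm_num [Fin.ext_iff]
    have hW0 : ∀ i j, extendW (t • coordDir R 2 dx r 0 i₁ j₁ + s • coordDir R 2 dx r 1 i₂ j₂)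
        r.val 0 i j = t * (if i = i₁ ∧ j = j₁ then 1 else 0) := by
      intro i j
      rw [combo_entry t s r r 0 1 i₁ j₁ i₂ j₂ r.val 0 r.isLt (by omega)]
      norm_num [Fin.ext_iff]
    have H : ∀ r', r' ≠ r.val →
        extendW (t • coordDir R 2 dx r 0 i₁ j₁ + s • coordDir R 2 dx r 1 i₂ j₂) r' 0 = 0 ∨
        extendW (t • coordDir R 2 dx r 0 i₁ j₁ + s • coordDir R 2 dx r 1 i₂ j₂) r' 1 = 0 := by
      intro r' hne
      left
      apply combo_entry_zero <;> exact fun hc => hne hc.1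
    have hnet : ∀ μ, net σpre σmid σpost 2
        (extendW (t • coordDir R 2 dx r 0 i₁ j₁ + s • coordDir R 2 dx r 1 i₂ j₂)) R (X μ)
        = fun i => X μ i + (if i = i₂ ∧ j₂ = i₁ then (1:ℝ) else 0) *
            σpost (s * σmid (t * σpre (X μ j₁))) := by
      intro μ
      rw [net_one_unit σpre σmid σpost hmid0 hpost0 _ r.val H (X μ) R, if_pos r.isLt]
      exact resUnit_rank_one σpre σmid σpost hmid0 hpost0 s t i₂ j₂ i₁ j₁ _ hW1 hW0 (X μ)
    unfold loss
    congr 1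
    refine Finset.sum_congr rfl fun μ _ => Finset.sum_congr rfl fun i _ => ?_
    rw [hnet μ]
    ring
  simp only [hload]
  have hds : ∀ (μ : Fin m) (t : ℝ),
      HasDerivAt (fun s : ℝ => σpost (s * σmid (t * σpre (X μ j₁))))
        (deriv σpost 0 * σmid (t * σpre (X μ j₁))) 0 := by
    intro μ t
    have d1 : HasDerivAt (fun s : ℝ => s * σmid (t * σpre (X μ j₁)))
        (σmid (t * σpre (X μ j₁))) 0 := by
      simpa using (hasDerivAt_id (0:ℝ)).mul_const (σmid (t * σpre (X μ j₁)))
    have dp : HasDerivAt σpost (deriv σpost 0)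
        ((fun s : ℝ => s * σmid (t * σpre (X μ j₁))) 0) := by
      simpa using ((hpost.differentiable (by simp)) 0).hasDerivAt
    have d4 := dp.comp 0 d1
    simpa [Function.comp_def] using d4
  have hdt : ∀ μ : Fin m,
      HasDerivAt (fun t : ℝ => deriv σpost 0 * σmid (t * σpre (X μ j₁)))
        (deriv σpost 0 * (deriv σmid 0 * σpre (X μ j₁))) 0 := by
    intro μ
    have d1 : HasDerivAt (fun t : ℝ => t * σpre (X μ j₁)) (σpre (X μ j₁)) 0 := by
      simpa using (hasDerivAt_id (0:ℝ)).mul_const (σpre (X μ j₁))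
    have dm : HasDerivAt σmid (deriv σmid 0) ((fun t : ℝ => t * σpre (X μ j₁)) 0) := by
      simpa using ((hmid.differentiable (by simp)) 0).hasDerivAt
    have d3 := (dm.comp 0 d1).const_mul (deriv σpost 0)
    simpa [Function.comp, mul_assoc] using d3
  rw [key_deriv (fun (_ : Fin m) (i : Fin dx) => if i = i₂ ∧ j₂ = i₁ then (1:ℝ) else 0)
      (fun μ i => X μ i - Y μ i)
      (fun μ t s => σpost (s * σmid (t * σpre (X μ j₁))))
      (by intro μ t; simp [hpost0])
      (fun μ t => deriv σpost 0 * σmid (t * σpre (X μ j₁))) hds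
      (fun μ => deriv σpost 0 * (deriv σmid 0 * σpre (X μ j₁))) hdt]
  by_cases hj : j₂ = i₁
  · rw [if_pos hj]
    have hsum : ∀ μ : Fin m, (∑ i, 2 * (X μ i - Y μ i) *
          (if i = i₂ ∧ j₂ = i₁ then (1:ℝ) else 0) *
          (deriv σpost 0 * (deriv σmid 0 * σpre (X μ j₁))))
        = 2 * (X μ i₂ - Y μ i₂) * (deriv σpost 0 * (deriv σmid 0 * σpre (X μ j₁))) := by
      intro μ
      simp [hj, mul_ite, ite_mul, Finset.sum_ite_eq']
    simp only [hsum]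
    rw [Finset.mul_sum, Finset.mul_sum]
    refine Finset.sum_congr rfl fun μ _ => ?_
    ring
  · rw [if_neg hj]
    have hz : ∀ i : Fin dx, (if i = i₂ ∧ j₂ = i₁ then (1:ℝ) else 0) = 0 := by
      intro i; simp [hj]
    simp [hz]

/-- Theorem 2, part 2: entries of the Hessian of a 2-shortcut network at zero.
Layers are indexed by `Fin 2`, so layer 1 of the paper is index `0` and layer 2 is index `1`.
The only nonvanishing second partials at `w = 0` pair a layer-2 parameter `w^{r,2}_{i₁,j₁}` with a
layer-1 parameter `w^{r,1}_{i₂,j₂}` of the same residual unit with `j₁ = i₂`, in which case the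
value is `(σmid'(0)·σpost'(0)/m) · ∑_μ σpre(x^μ_{j₂})·(x^μ_{i₁} − y^μ_{i₁})`. -/
theorem hessian_entries_two_shortcut
    {dx m R : ℕ}
    (σpre σmid σpost : ℝ → ℝ)
    (hpre : ContDiff ℝ (⊤ : ℕ∞) σpre) (hmid : ContDiff ℝ (⊤ : ℕ∞) σmid) (hpost : ContDiff ℝ (⊤ : ℕ∞) σpost)
    (hmid0 : σmid 0 = 0) (hpost0 : σpost 0 = 0)
    (X Y : Fin m → Fin dx → ℝ)
    (r₁ r₂ : Fin R) (l₁ l₂ : Fin 2) (i₁ j₁ i₂ j₂ : Fin dx) :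
    d2 (loss σpre σmid σpost 2 R X Y)
        (coordDir R 2 dx r₁ l₁ i₁ j₁) (coordDir R 2 dx r₂ l₂ i₂ j₂) =
      if r₁ = r₂ ∧ l₁ = 1 ∧ l₂ = 0 ∧ j₁ = i₂ then
        (deriv σmid 0 * deriv σpost 0 / (m : ℝ)) *
          ∑ μ : Fin m, σpre (X μ j₂) * (X μ i₁ - Y μ i₁)
      else if r₁ = r₂ ∧ l₁ = 0 ∧ l₂ = 1 ∧ j₂ = i₁ then
        (deriv σmid 0 * deriv σpost 0 / (m : ℝ)) *
          ∑ μ : Fin m, σpre (X μ j₁) * (X μ i₂ - Y μ i₂)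
      else 0 := by
  classical
  rw [d2_eq_line _ (contDiff_loss σpre σmid σpost hpre hmid hpost X Y) _ _]
  have fin2 : ∀ l : Fin 2, l = 0 ∨ l = 1 := by decide
  by_cases hr : r₁ = r₂
  · subst hr
    rcases fin2 l₁ with h1 | h1 <;> subst h1 <;> rcases fin2 l₂ with h2 | h2 <;> subst h2
    · -- l₁ = 0, l₂ = 0 : degenerate
      refine Eq.trans (deg_case σpre σmid σpost hmid0 hpost0 X Y _ _ ?_) ?_
      · intro t s r'
        right
        apply combo_entry_zero <;> rintro ⟨-, hl⟩ <;> simp at hl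
      · simp
    · -- l₁ = 0, l₂ = 1 : case B
      refine Eq.trans (main_case_B σpre σmid σpost hpre hmid hpost hmid0 hpost0
        X Y r₁ i₁ j₁ i₂ j₂) ?_
      by_cases hj : j₂ = i₁ <;> simp [hj]
    · -- l₁ = 1, l₂ = 0 : case A
      refine Eq.trans (main_case_A σpre σmid σpost hpre hmid hpost hmid0 hpost0
        X Y r₁ i₁ j₁ i₂ j₂) ?_
      by_cases hj : j₁ = i₂ <;> simp [hj]
    · -- l₁ = 1, l₂ = 1 : degenerate
      refine Eq.trans (deg_case σpre σmid σpost hmid0 hpost0 X Y _ _ ?_) ?_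
      · intro t s r'
        left
        apply combo_entry_zero <;> rintro ⟨-, hl⟩ <;> simp at hl
      · simp
  · have hrv : r₁.val ≠ r₂.val := fun h => hr (Fin.ext h)
    refine Eq.trans (deg_case σpre σmid σpost hmid0 hpost0 X Y _ _ ?_) ?_
    · intro t s r'
      rcases fin2 l₁ with h1 | h1 <;> subst h1 <;> rcases fin2 l₂ with h2 | h2 <;> subst h2
      · right
        apply combo_entry_zero <;> rintro ⟨-, hl⟩ <;> simp at hl
      · by_cases hA : r' = r₁.val
        · right
          apply combo_entry_zero
          · rintro ⟨-, hl⟩; simp at hl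
          · rintro ⟨ha, -⟩; omega
        · left
          apply combo_entry_zero
          · rintro ⟨ha, -⟩; exact hA ha
          · rintro ⟨-, hl⟩; simp at hl
      · by_cases hA : r' = r₁.val
        · left
          apply combo_entry_zero
          · rintro ⟨-, hl⟩; simp at hl
          · rintro ⟨ha, -⟩; omega
        · right
          apply combo_entry_zero
          · rintro ⟨ha, -⟩; exact hA ha
          · rintro ⟨-, hl⟩; simp at hl
      · left
        apply combo_entry_zero <;> rintro ⟨-, hl⟩ <;> simp at hl
    · simp [hr]

end
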